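/- arXiv:2110.12219 — 4 statements merged into one kernel-verified Lean document; each statement's English description precedes it below -/
import Mathlib

section
/- Let m ≥ 1 and let a = (a_1,…,a_m), b = (b_1,…,b_m) be complex vectors and z ∈ ℂ such that sin(π(a_j − a_k)) ≠ 0 for all j ≠ k and sin(π(z − a_k)) ≠ 0 for all k. Then for each choice of sign ε ∈ {+1, −1}: ∑_{k=1}^{m} [ (∏_{j=1}^{m} sin(π(b_j − a_k))) / (∏_{j≠k} sin(π(a_j − a_k))) ] · e^{ε·iπ(z − a_k)} / sin(π(z − a_k)) = e^{ε·iπψ} − (∏_{j=1}^{m} sin(π(z − b_j))) / (∏_{j=1}^{m} sin(π(z − a_j))), where ψ = ∑_{j=1}^{m} (b_j − a_j). -/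
/-!
Put `q k = exp (π i a k)`, `p j = exp (π i b j)`, `t = exp (π i z)`. The formula
`sin (π (u - v)) = (U ^ 2 - V ^ 2) / (2 i U V)`, with `U = exp (π i u)` and `V = exp (π i v)`,
turns every sine into a rational function. After the monomial factors cancel, the identity with
`ε = -1` is the partial fraction expansion of `∏ (w - p j ^ 2) / ∏ (w - q j ^ 2)` in `w = t ^ 2`:
numerator and denominator are monic of degree `m`, so their difference is recovered by Lagrange
interpolation at the nodes `q k ^ 2`. For `ε = 1` each summand picks up the factor `w / q k ^ 2`,
and `w / (x (w - x)) = 1 / (w - x) - 1 / (0 - x)`, so the same expansion at `w` and at `0`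
gives it.
-/

open Finset Polynomial Complex
open scoped Real

section PartialFractions

variable {F ι : Type*} [Field F] [DecidableEq ι] {s : Finset ι} {α : ι → F}

theorem prod_sub_div_prod_erase_sub_eq_neg_nodalWeight_mul {k : ι} (hk : k ∈ s) (β : ι → F) :
    (∏ j ∈ s, (β j - α k)) / ∏ j ∈ s.erase k, (α j - α k) =
      -(Lagrange.nodalWeight s α k * ∏ j ∈ s, (α k - β j)) := by
  have hcard : #(s.erase k) + 1 = #s := card_erase_add_one hk
  have hflip (t : Finset ι) (g : ι → F) :
      ∏ j ∈ t, (g j - α k) = (-1) ^ #t * ∏ j ∈ t, (α k - g j) := by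
    rw [← prod_neg]; simp
  rw [Lagrange.nodalWeight, prod_inv_distrib, hflip, hflip, ← hcard, pow_succ]
  field_simp

theorem sum_prod_sub_div_prod_erase_sub_div_sub (hα : Set.InjOn α s) (β : ι → F) {w : F}
    (hw : ∀ k ∈ s, w ≠ α k) :
    ∑ k ∈ s, (∏ j ∈ s, (β j - α k)) / (∏ j ∈ s.erase k, (α j - α k)) / (w - α k) =
      1 - (∏ j ∈ s, (w - β j)) / ∏ j ∈ s, (w - α j) := by
  set f := Lagrange.nodal s α - Lagrange.nodal s β
  have hf : f.degree < #s := by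
    rw [← Lagrange.degree_nodal (v := α)]
    exact degree_sub_lt_left (by rw [Lagrange.degree_nodal, Lagrange.degree_nodal])
      Lagrange.nodal_ne_zero
      (by rw [Lagrange.nodal_monic.leadingCoeff, Lagrange.nodal_monic.leadingCoeff])
  have hfw := Lagrange.eval_interpolate_not_at_node (fun k => f.eval (α k)) hw
  rw [← Lagrange.eq_interpolate hα hf] at hfw
  simp only [f, eval_sub, Lagrange.eval_nodal] at hfw
  have hnodal : ∏ j ∈ s, (w - α j) ≠ 0 := prod_ne_zero_iff.2 fun j hj => sub_ne_zero.2 (hw j hj)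
  rw [one_sub_div hnodal, hfw, mul_div_cancel_left₀ _ hnodal]
  refine sum_congr rfl fun k hk => ?_
  rw [prod_sub_div_prod_erase_sub_eq_neg_nodalWeight_mul hk,
    prod_eq_zero (f := fun j => α k - α j) hk (sub_self _)]
  ring

theorem sum_prod_sub_div_prod_erase_sub_div_sub_mul_div (hα : Set.InjOn α s)
    (hα0 : ∀ k ∈ s, α k ≠ 0) (β : ι → F) {w : F} (hw : ∀ k ∈ s, w ≠ α k) :
    ∑ k ∈ s, (∏ j ∈ s, (β j - α k)) / (∏ j ∈ s.erase k, (α j - α k)) / (w - α k) * (w / α k) =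
      (∏ j ∈ s, β j) / (∏ j ∈ s, α j) - (∏ j ∈ s, (w - β j)) / ∏ j ∈ s, (w - α j) := by
  have hR0 : (∏ j ∈ s, (0 - β j)) / ∏ j ∈ s, (0 - α j) = (∏ j ∈ s, β j) / ∏ j ∈ s, α j := by
    simp only [zero_sub, prod_neg]
    exact mul_div_mul_left _ _ (pow_ne_zero _ (neg_ne_zero.2 one_ne_zero))
  calc _ = ∑ k ∈ s, ((∏ j ∈ s, (β j - α k)) / (∏ j ∈ s.erase k, (α j - α k)) / (w - α k) -
        (∏ j ∈ s, (β j - α k)) / (∏ j ∈ s.erase k, (α j - α k)) / (0 - α k)) := by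
        refine sum_congr rfl fun k hk => ?_
        have := sub_ne_zero.2 (hw k hk)
        have := hα0 k hk
        field_simp
        ring
    _ = _ := by
      rw [sum_sub_distrib, sum_prod_sub_div_prod_erase_sub_div_sub hα β hw,
        sum_prod_sub_div_prod_erase_sub_div_sub hα β fun k hk => (hα0 k hk).symm, hR0]
      ring

end PartialFractions

noncomputable def laurentSin (x y : ℂ) : ℂ := (x ^ 2 - y ^ 2) / (2 * I * x * y)

theorem laurentSin_eq_zero_of_sq_eq {x y : ℂ} (h : x ^ 2 = y ^ 2) : laurentSin x y = 0 := by
  rw [laurentSin, h, sub_self, zero_div]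

theorem Complex.sin_sub_eq_laurentSin (x y : ℂ) :
    sin (x - y) = laurentSin (exp (x * I)) (exp (y * I)) := by
  rw [laurentSin, sin, neg_mul, sub_mul x, exp_neg, exp_sub]
  have hX := exp_ne_zero (x * I)
  have hY := exp_ne_zero (y * I)
  generalize exp (x * I) = X at *
  generalize exp (y * I) = Y at *
  field_simp
  linear_combination (Y ^ 2 - X ^ 2) * I_sq

theorem Complex.sin_pi_mul_sub_eq_laurentSin (u v : ℂ) :
    sin (π * (u - v)) = laurentSin (exp (π * u * I)) (exp (π * v * I)) := by
  rw [mul_sub, sin_sub_eq_laurentSin]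

section LaurentSin

variable {ι : Type*} {s : Finset ι} {p q : ι → ℂ} {t : ℂ}

theorem prod_laurentSin_left (s : Finset ι) (p : ι → ℂ) (y : ℂ) :
    ∏ j ∈ s, laurentSin (p j) y =
      (∏ j ∈ s, (p j ^ 2 - y ^ 2)) / ((2 * I * y) ^ #s * ∏ j ∈ s, p j) := by
  rw [← prod_const, ← prod_mul_distrib, ← prod_div_distrib]
  refine prod_congr rfl fun j _ => ?_
  rw [laurentSin, mul_right_comm]

theorem prod_laurentSin_right (s : Finset ι) (p : ι → ℂ) (y : ℂ) :
    ∏ j ∈ s, laurentSin y (p j) =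
      (∏ j ∈ s, (y ^ 2 - p j ^ 2)) / ((2 * I * y) ^ #s * ∏ j ∈ s, p j) := by
  rw [← prod_const, ← prod_mul_distrib, ← prod_div_distrib]
  rfl

theorem prod_laurentSin_div_prod_erase_mul_div [DecidableEq ι] {k : ι} (hk : k ∈ s)
    (hq : ∀ j ∈ s, q j ≠ 0) (r : ℂ) :
    (∏ j ∈ s, laurentSin (p j) (q k)) / (∏ j ∈ s.erase k, laurentSin (q j) (q k)) *
        (r / laurentSin t (q k)) =
      (∏ j ∈ s, q j) / (∏ j ∈ s, p j) *
        ((∏ j ∈ s, (p j ^ 2 - q k ^ 2)) / (∏ j ∈ s.erase k, (q j ^ 2 - q k ^ 2)) /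
          (t ^ 2 - q k ^ 2)) * (t / q k * r) := by
  have hcard : #(s.erase k) + 1 = #s := card_erase_add_one hk
  have hQ : ∏ j ∈ s.erase k, q j ≠ 0 :=
    prod_ne_zero_iff.2 fun j hj => hq j (mem_of_mem_erase hj)
  have hqk := hq k hk
  rw [prod_laurentSin_left, prod_laurentSin_left, ← mul_prod_erase s q hk, ← hcard, pow_succ,
    laurentSin]
  field_simp
  ring

theorem prod_laurentSin_div_prod_laurentSin (hq : ∀ j ∈ s, q j ≠ 0) (ht : t ≠ 0) :
    (∏ j ∈ s, laurentSin t (p j)) / ∏ j ∈ s, laurentSin t (q j) =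
      (∏ j ∈ s, q j) / (∏ j ∈ s, p j) *
        ((∏ j ∈ s, (t ^ 2 - p j ^ 2)) / ∏ j ∈ s, (t ^ 2 - q j ^ 2)) := by
  have hQ : ∏ j ∈ s, q j ≠ 0 := prod_ne_zero_iff.2 hq
  rw [prod_laurentSin_right, prod_laurentSin_right]
  field_simp

variable [DecidableEq ι] (hqs : Set.InjOn (fun j => q j ^ 2) s) (hq : ∀ j ∈ s, q j ≠ 0)
  (ht0 : t ≠ 0) (ht : ∀ k ∈ s, t ^ 2 ≠ q k ^ 2)
include hqs hq ht0 ht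

-- The factors `q k / t` and `t / q k` stand for `exp (∓ π i (z - a k))`.
theorem hermite_laurentSin_identity_neg :
    ∑ k ∈ s, (∏ j ∈ s, laurentSin (p j) (q k)) / (∏ j ∈ s.erase k, laurentSin (q j) (q k)) *
        (q k / t / laurentSin t (q k)) =
      (∏ j ∈ s, q j) / (∏ j ∈ s, p j) -
        (∏ j ∈ s, laurentSin t (p j)) / ∏ j ∈ s, laurentSin t (q j) := by
  have hterm : ∀ k ∈ s, t / q k * (q k / t) = 1 := fun k hk => by
    field_simp [hq k hk]
  rw [sum_congr rfl fun k hk => by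
      rw [prod_laurentSin_div_prod_erase_mul_div hk hq, hterm k hk, mul_one],
    ← mul_sum, sum_prod_sub_div_prod_erase_sub_div_sub hqs _ ht,
    prod_laurentSin_div_prod_laurentSin hq ht0]
  ring

theorem hermite_laurentSin_identity_pos (hp : ∀ j ∈ s, p j ≠ 0) :
    ∑ k ∈ s, (∏ j ∈ s, laurentSin (p j) (q k)) / (∏ j ∈ s.erase k, laurentSin (q j) (q k)) *
        (t / q k / laurentSin t (q k)) =
      (∏ j ∈ s, p j) / (∏ j ∈ s, q j) -
        (∏ j ∈ s, laurentSin t (p j)) / ∏ j ∈ s, laurentSin t (q j) := by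
  have hterm (k : ι) : t / q k * (t / q k) = t ^ 2 / q k ^ 2 := by ring
  rw [sum_congr rfl fun k hk => by
      rw [prod_laurentSin_div_prod_erase_mul_div hk hq, hterm k, mul_assoc],
    ← mul_sum, sum_prod_sub_div_prod_erase_sub_div_sub_mul_div hqs
      (fun k hk => pow_ne_zero 2 (hq k hk)) _ ht,
    prod_laurentSin_div_prod_laurentSin hq ht0, prod_pow, prod_pow]
  have hP : ∏ j ∈ s, p j ≠ 0 := prod_ne_zero_iff.2 hp
  have hQ : ∏ j ∈ s, q j ≠ 0 := prod_ne_zero_iff.2 hq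
  field_simp

end LaurentSin

theorem hermite_sine_identity_general {m : ℕ} (a b : Fin m → ℂ) (z : ℂ)
    (ha : ∀ j k : Fin m, j ≠ k → Complex.sin ((Real.pi : ℂ) * (a j - a k)) ≠ 0)
    (hz : ∀ k : Fin m, Complex.sin ((Real.pi : ℂ) * (z - a k)) ≠ 0)
    (ε : ℂ) (hε : ε = 1 ∨ ε = -1) :
    ∑ k : Fin m,
      ((∏ j : Fin m, Complex.sin ((Real.pi : ℂ) * (b j - a k))) /
        (∏ j ∈ Finset.univ.erase k, Complex.sin ((Real.pi : ℂ) * (a j - a k)))) *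
      (Complex.exp (ε * Complex.I * (Real.pi : ℂ) * (z - a k)) /
        Complex.sin ((Real.pi : ℂ) * (z - a k)))
    = Complex.exp (ε * Complex.I * (Real.pi : ℂ) * (∑ j : Fin m, (b j - a j))) -
      (∏ j : Fin m, Complex.sin ((Real.pi : ℂ) * (z - b j))) /
      (∏ j : Fin m, Complex.sin ((Real.pi : ℂ) * (z - a j))) := by
  have hqs : Set.InjOn (fun j => exp (π * a j * I) ^ 2) (univ : Finset (Fin m)) :=
    fun j _ k _ h => not_imp_not.1 (ha j k) <| by
      rw [sin_pi_mul_sub_eq_laurentSin]; exact laurentSin_eq_zero_of_sq_eq h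
  have ht : ∀ k ∈ univ, exp (π * z * I) ^ 2 ≠ exp (π * a k * I) ^ 2 := fun k _ h =>
    hz k <| by rw [sin_pi_mul_sub_eq_laurentSin]; exact laurentSin_eq_zero_of_sq_eq h
  have hq : ∀ j ∈ univ, exp (π * a j * I) ≠ 0 := fun _ _ => exp_ne_zero _
  rcases hε with rfl | rfl
  · have hexp (u v : ℂ) : exp (1 * I * π * (u - v)) = exp (π * u * I) / exp (π * v * I) := by
      rw [← exp_sub]; ring_nf
    simp only [sin_pi_mul_sub_eq_laurentSin, mul_sum, exp_sum, hexp, prod_div_distrib]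
    exact hermite_laurentSin_identity_pos hqs hq (exp_ne_zero _) ht fun _ _ => exp_ne_zero _
  · have hexp (u v : ℂ) : exp (-1 * I * π * (u - v)) = exp (π * v * I) / exp (π * u * I) := by
      rw [← exp_sub]; ring_nf
    simp only [sin_pi_mul_sub_eq_laurentSin, mul_sum, exp_sum, hexp, prod_div_distrib]
    exact hermite_laurentSin_identity_neg hqs hq (exp_ne_zero _) ht

/-- Hermite-type sine identity (Lemma 2.1 of the paper). -/
theorem hermite_sine_identity {m : ℕ} (hm : 1 ≤ m) (a b : Fin m → ℂ) (z : ℂ)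
    (ha : ∀ j k : Fin m, j ≠ k → Complex.sin ((Real.pi : ℂ) * (a j - a k)) ≠ 0)
    (hz : ∀ k : Fin m, Complex.sin ((Real.pi : ℂ) * (z - a k)) ≠ 0)
    (ε : ℂ) (hε : ε = 1 ∨ ε = -1) :
    ∑ k : Fin m,
      ((∏ j : Fin m, Complex.sin ((Real.pi : ℂ) * (b j - a k))) /
        (∏ j ∈ Finset.univ.erase k, Complex.sin ((Real.pi : ℂ) * (a j - a k)))) *
      (Complex.exp (ε * Complex.I * (Real.pi : ℂ) * (z - a k)) /
        Complex.sin ((Real.pi : ℂ) * (z - a k)))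
    = Complex.exp (ε * Complex.I * (Real.pi : ℂ) * (∑ j : Fin m, (b j - a j))) -
      (∏ j : Fin m, Complex.sin ((Real.pi : ℂ) * (z - b j))) /
      (∏ j : Fin m, Complex.sin ((Real.pi : ℂ) * (z - a j))) :=
  hermite_sine_identity_general a b z ha hz ε hε
end

section
/- Let m ≥ 1 and let a = (a_1,…,a_m), b = (b_1,…,b_m) be complex vectors with sin(π(a_j − a_k)) ≠ 0 for all j ≠ k. Then ∑_{k=1}^{m} (∏_{j=1}^{m} sin(π(b_j − a_k))) / (∏_{j≠k} sin(π(a_j − a_k))) = sin(πψ), where ψ = ∑_{j=1}^{m} (b_j − a_j). -/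
/-!
In the coordinates `u = exp (π i b)`, `v = exp (π i a)` one has
`sin (π (b - a)) = (u² - v²) / (2 i u v)`, and after clearing the factors `2 i u v` the identity
becomes the partial-fraction identity
`∑ₖ ∏ⱼ (Uⱼ - Vₖ) / (Vₖ ∏_{j ≠ k} (Vⱼ - Vₖ)) = ∏ U / ∏ V - 1` for `U = u²`, `V = v²`.
That is Lagrange interpolation of the monic polynomial `∏ⱼ (X + Uⱼ)` at the `m + 1` nodes
`0, -V₁, …, -Vₘ`: the weighted sum of its values is its coefficient of `Xᵐ`, namely `1`.
-/

open Finset Polynomial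

namespace Finset

variable {α : Type*} [DecidableEq α]

theorem insertNone_erase_none (s : Finset α) : (insertNone s).erase none = s.map .some := by
  ext (_ | x) <;> simp

theorem insertNone_erase_some (s : Finset α) (k : α) :
    (insertNone s).erase (some k) = insertNone (s.erase k) := by
  ext (_ | x) <;> simp

end Finset

theorem sum_prod_sub_div_mul_prod_erase_sub {F ι : Type*} [Field F] [Fintype ι] [DecidableEq ι]
    (U : ι → F) {V : ι → F} (hV : ∀ k, V k ≠ 0) (hV_inj : Function.Injective V) :
    ∑ k, (∏ j, (U j - V k)) / (V k * ∏ j ∈ univ.erase k, (V j - V k))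
      = (∏ j, U j) / (∏ j, V j) - 1 := by
  let w : Option ι → F := fun o => o.elim 0 (-V ·)
  have hw : Set.InjOn w (insertNone (univ : Finset ι) : Set (Option ι)) := by
    rintro (_ | x) - (_ | y) - h
    · rfl
    · exact absurd (neg_eq_zero.mp h.symm) (hV y)
    · exact absurd (neg_eq_zero.mp h) (hV x)
    · exact congrArg some (hV_inj (neg_injective h))
  let P : F[X] := ∏ j, (X + C (U j))
  have hP : P.Monic := monic_prod_of_monic _ _ fun j _ => monic_X_add_C _
  have hP_deg : P.natDegree = Fintype.card ι := by
    simp [P, natDegree_prod_of_monic _ _ fun j _ => monic_X_add_C (U j)]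
  have key := Lagrange.coeff_eq_sum hw (P := P) (by
    rw [card_insertNone, card_univ, ← hP_deg]
    exact degree_le_natDegree.trans_lt (by exact_mod_cast Nat.lt_succ_self _))
  rw [card_insertNone, card_univ, Nat.add_sub_cancel, ← hP_deg, hP.coeff_natDegree,
    sum_insertNone, insertNone_erase_none, prod_map] at key
  simp only [insertNone_erase_some, prod_insertNone] at key
  simp only [w, P, eval_prod, eval_add, eval_X, eval_C, Option.elim, Function.Embedding.some_apply,
    zero_add, sub_zero, sub_neg_eq_add, neg_mul, neg_add_eq_sub, div_neg, sum_neg_distrib] at key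
  linear_combination key

theorem sum_prod_sq_sub_div_prod_erase {F ι : Type*} [Field F] [Fintype ι] [DecidableEq ι]
    {c : F} (hc : c ≠ 0) {u v : ι → F} (hv : ∀ j, v j ≠ 0)
    (hv_inj : Function.Injective fun j => v j ^ 2) :
    ∑ k, (∏ j, (u j ^ 2 - v k ^ 2) / (c * u j * v k)) /
        ∏ j ∈ univ.erase k, (v j ^ 2 - v k ^ 2) / (c * v j * v k)
      = ((∏ j, u j) ^ 2 - (∏ j, v j) ^ 2) / (c * (∏ j, u j) * ∏ j, v j) := by
  have hv_prod : ∏ j, v j ≠ 0 := prod_ne_zero_iff.mpr fun j _ => hv j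
  have hterm : ∀ k, (∏ j, (u j ^ 2 - v k ^ 2) / (c * u j * v k)) /
        ∏ j ∈ univ.erase k, (v j ^ 2 - v k ^ 2) / (c * v j * v k)
      = (∏ j, (u j ^ 2 - v k ^ 2)) / (v k ^ 2 * ∏ j ∈ univ.erase k, (v j ^ 2 - v k ^ 2)) *
        ((∏ j, v j) / (c * ∏ j, u j)) := by
    intro k
    have hden : (∏ j ∈ univ.erase k, c * v j * v k) * (c * v k * v k) = ∏ j, c * v j * v k :=
      prod_erase_mul _ _ (mem_univ k)
    have hnum : (∏ j, c * u j * v k) = (∏ j, c * v j * v k) * ((∏ j, u j) / ∏ j, v j) := by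
      rw [← prod_div_distrib, ← prod_mul_distrib]
      refine prod_congr rfl fun j _ => ?_
      field_simp [hv j, hv k]
    have hden_ne : ∏ j ∈ univ.erase k, c * v j * v k ≠ 0 :=
      prod_ne_zero_iff.mpr fun j _ => mul_ne_zero (mul_ne_zero hc (hv j)) (hv k)
    rw [prod_div_distrib, prod_div_distrib, hnum, ← hden]
    generalize ∏ j ∈ univ.erase k, c * v j * v k = B at hden_ne ⊢
    field_simp [hv k]
  rw [sum_congr rfl fun k _ => hterm k, ← sum_mul,
    sum_prod_sub_div_mul_prod_erase_sub _ (fun k => pow_ne_zero 2 (hv k)) hv_inj,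
    prod_pow, prod_pow]
  field_simp

theorem Complex.sin_pi_mul_sub (x y : ℂ) :
    sin (Real.pi * (x - y)) = (exp (Real.pi * I * x) ^ 2 - exp (Real.pi * I * y) ^ 2) /
      (2 * I * exp (Real.pi * I * x) * exp (Real.pi * I * y)) := by
  have h₁ : exp (Real.pi * (x - y) * I) = exp (Real.pi * I * x) / exp (Real.pi * I * y) := by
    rw [← exp_sub]; ring_nf
  have h₂ : exp (-(Real.pi * (x - y)) * I) = exp (Real.pi * I * y) / exp (Real.pi * I * x) := by
    rw [← exp_sub]; ring_nf
  rw [sin, h₁, h₂]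
  field_simp [exp_ne_zero]
  ring_nf
  rw [I_sq]
  ring

theorem Complex.exp_pi_mul_I_mul_sum {ι : Type*} (s : Finset ι) (x : ι → ℂ) :
    exp (Real.pi * I * ∑ j ∈ s, x j) = ∏ j ∈ s, exp (Real.pi * I * x j) := by
  rw [mul_sum, exp_sum]

theorem sine_ptolemy_identity_general {m : ℕ} (a b : Fin m → ℂ)
    (ha : ∀ j k : Fin m, j ≠ k → Complex.sin ((Real.pi : ℂ) * (a j - a k)) ≠ 0) :
    ∑ k : Fin m,
      (∏ j : Fin m, Complex.sin ((Real.pi : ℂ) * (b j - a k))) /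
        (∏ j ∈ Finset.univ.erase k, Complex.sin ((Real.pi : ℂ) * (a j - a k)))
    = Complex.sin ((Real.pi : ℂ) * (∑ j : Fin m, (b j - a j))) := by
  have ha_inj : Function.Injective fun j => Complex.exp (Real.pi * Complex.I * a j) ^ 2 := by
    intro j k h
    dsimp only at h
    by_contra hjk
    exact ha j k hjk (by rw [Complex.sin_pi_mul_sub, h, sub_self, zero_div])
  simp_rw [sum_sub_distrib, Complex.sin_pi_mul_sub, Complex.exp_pi_mul_I_mul_sum]
  exact sum_prod_sq_sub_div_prod_erase (by simp) (fun _ => Complex.exp_ne_zero _) ha_inj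

/-- Sine analogue of a Ptolemy-type relation (identity (2.2) of the paper). -/
theorem sine_ptolemy_identity {m : ℕ} (hm : 1 ≤ m) (a b : Fin m → ℂ)
    (ha : ∀ j k : Fin m, j ≠ k → Complex.sin ((Real.pi : ℂ) * (a j - a k)) ≠ 0) :
    ∑ k : Fin m,
      (∏ j : Fin m, Complex.sin ((Real.pi : ℂ) * (b j - a k))) /
        (∏ j ∈ Finset.univ.erase k, Complex.sin ((Real.pi : ℂ) * (a j - a k)))
    = Complex.sin ((Real.pi : ℂ) * (∑ j : Fin m, (b j - a j))) :=
  sine_ptolemy_identity_general a b ha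
end

section
/- Let m ≥ 1 and let a = (a_1,…,a_m), b = (b_1,…,b_m) be complex vectors with sin(π(a_j − a_k)) ≠ 0 for all j ≠ k and sin(π(b_l − a_k)) ≠ 0 for all k, for some fixed index l ∈ {1,…,m}. Then for each choice of sign ε ∈ {+1, −1}: ∑_{k=1}^{m} [ (∏_{j=1}^{m} sin(π(b_j − a_k))) / (∏_{j≠k} sin(π(a_j − a_k))) ] · e^{ε·iπ(b_l − a_k)} / sin(π(b_l − a_k)) = e^{ε·iπψ}, where ψ = ∑_{j=1}^{m} (b_j − a_j). -/
/-!
For both signs `ε`, `sin (π * (α - β)) = (x ^ 2 - y ^ 2) / (2 * I * ε * x * y)` where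
`x = exp (ε * I * π * α)` and `y = exp (ε * I * π * β)`. In the variables
`u k = exp (ε * I * π * a k) ^ 2` and `v j = exp (ε * I * π * b j) ^ 2` the `k`-th summand
becomes, up to the common factor `(∏ j, exp (ε * I * π * (a j + b j)))⁻¹`, the term
`P (u k) * ∏ j ≠ k, (0 - u j) / (u k - u j)` with `P X = v l * ∏ j ≠ l, (v j - X)` of degree
`< m`. Lagrange interpolation at the distinct nodes `u k` turns the sum into `P 0 = ∏ j, v j`.
-/

open Finset Polynomial Complex
open scoped Real

theorem Lagrange.eval_eq_sum_eval_mul_prod {F ι : Type*} [Field F] [DecidableEq ι]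
    {s : Finset ι} {v : ι → F} (hvs : Set.InjOn v s) {P : F[X]} (hP : P.degree < #s) (x : F) :
    P.eval x = ∑ i ∈ s, P.eval (v i) * ∏ j ∈ s.erase i, (x - v j) / (v i - v j) := by
  conv_lhs => rw [Lagrange.eq_interpolate hvs hP]
  simp [Lagrange.interpolate_apply, eval_finsetSum, Lagrange.basis, eval_prod,
    Lagrange.basisDivisor, div_eq_inv_mul]

theorem degree_C_mul_prod_erase_C_sub_X_lt {K ι : Type*} [Field K] [DecidableEq ι]
    (r : K) (w : ι → K) {s : Finset ι} {l : ι} (hl : l ∈ s) :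
    (C r * ∏ j ∈ s.erase l, (C (w j) - X)).degree < #s := by
  have hfactor (j : ι) : (C (w j) - X).natDegree ≤ 1 := by compute_degree
  have hprod : (∏ j ∈ s.erase l, (C (w j) - X)).natDegree ≤ #(s.erase l) := by
    simpa only [smul_eq_mul, mul_one] using
      (natDegree_prod_le _ _).trans (sum_le_card_nsmul (s.erase l) _ 1 fun j _ => hfactor j)
  refine degree_le_natDegree.trans_lt ?_
  exact_mod_cast ((natDegree_C_mul_le _ _).trans hprod).trans_lt (card_erase_lt_of_mem hl)

def sinOfExp {K : Type*} [Field K] (c x y : K) : K := (x ^ 2 - y ^ 2) / (c * x * y)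

section
variable {K ι : Type*} [Field K]

theorem prod_sinOfExp_left (s : Finset ι) (c : K) (x : ι → K) (y : K) :
    ∏ j ∈ s, sinOfExp c (x j) y =
      (∏ j ∈ s, (x j ^ 2 - y ^ 2)) / (c ^ #s * (∏ j ∈ s, x j) * y ^ #s) := by
  simp [sinOfExp, prod_div_distrib, prod_mul_distrib, prod_const]

theorem sq_ne_sq_of_sinOfExp_ne_zero {c x y : K} (h : sinOfExp c x y ≠ 0) : x ^ 2 ≠ y ^ 2 := by
  intro hxy
  simp [sinOfExp, hxy] at h

variable [Fintype ι] [DecidableEq ι]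

theorem sinOfExp_summand_eq {c : K} (hc : c ≠ 0) {p q : ι → K} (hp : ∀ j, p j ≠ 0)
    (hq : ∀ j, q j ≠ 0) {k : ι} (hpp : ∀ j, j ≠ k → sinOfExp c (p j) (p k) ≠ 0) (l : ι)
    (hqp : sinOfExp c (q l) (p k) ≠ 0) :
    (∏ j, sinOfExp c (q j) (p k)) / (∏ j ∈ univ.erase k, sinOfExp c (p j) (p k)) *
        (q l / p k / sinOfExp c (q l) (p k)) =
      (q l ^ 2 * ∏ j ∈ univ.erase l, (q j ^ 2 - p k ^ 2)) *
          (∏ j ∈ univ.erase k, (0 - p j ^ 2) / (p k ^ 2 - p j ^ 2)) / ((∏ j, q j) * ∏ j, p j) := by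
  have hnodes : ∏ j ∈ univ.erase k, (0 - p j ^ 2) / (p k ^ 2 - p j ^ 2) =
      (∏ j ∈ univ.erase k, p j) ^ 2 / ∏ j ∈ univ.erase k, (p j ^ 2 - p k ^ 2) := by
    rw [← prod_pow, ← prod_div_distrib]
    refine prod_congr rfl fun j _ => ?_
    rw [zero_sub, ← neg_sub, neg_div_neg_eq]
  have hcard : #(univ.erase l) = #(univ.erase k) := by simp [card_erase_of_mem]
  have hdiff : ∏ j ∈ univ.erase k, (p j ^ 2 - p k ^ 2) ≠ 0 := prod_ne_zero_iff.mpr fun j hj =>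
    sub_ne_zero.mpr (sq_ne_sq_of_sinOfExp_ne_zero (hpp j (ne_of_mem_erase hj)))
  have hql : q l ^ 2 - p k ^ 2 ≠ 0 := sub_ne_zero.mpr (sq_ne_sq_of_sinOfExp_ne_zero hqp)
  have hQ : ∏ j ∈ univ.erase l, q j ≠ 0 := prod_ne_zero_iff.mpr fun j _ => hq j
  have hP : ∏ j ∈ univ.erase k, p j ≠ 0 := prod_ne_zero_iff.mpr fun j _ => hp j
  rw [← mul_prod_erase univ (fun j => sinOfExp c (q j) (p k)) (mem_univ l),
    ← mul_prod_erase univ q (mem_univ l), ← mul_prod_erase univ p (mem_univ k),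
    prod_sinOfExp_left, prod_sinOfExp_left, hnodes, hcard]
  have hpk := hp k
  have hql₀ := hq l
  unfold sinOfExp
  field_simp

theorem sum_sinOfExp_eq {c : K} (hc : c ≠ 0) {p q : ι → K} (hp : ∀ j, p j ≠ 0)
    (hq : ∀ j, q j ≠ 0) (hpp : ∀ j k, j ≠ k → sinOfExp c (p j) (p k) ≠ 0) (l : ι)
    (hqp : ∀ k, sinOfExp c (q l) (p k) ≠ 0) :
    ∑ k, (∏ j, sinOfExp c (q j) (p k)) / (∏ j ∈ univ.erase k, sinOfExp c (p j) (p k)) *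
        (q l / p k / sinOfExp c (q l) (p k)) = (∏ j, q j) / ∏ j, p j := by
  have hinj : Set.InjOn (fun j => p j ^ 2) (univ : Finset ι) := fun j _ k _ hjk => by
    by_contra hne
    exact sq_ne_sq_of_sinOfExp_ne_zero (hpp j k hne) hjk
  have hinterp := Lagrange.eval_eq_sum_eval_mul_prod hinj
    (degree_C_mul_prod_erase_C_sub_X_lt (q l ^ 2) (fun j => q j ^ 2) (mem_univ l)) 0
  simp only [eval_mul, eval_C, eval_prod, eval_sub, eval_X] at hinterp
  rw [sum_congr rfl fun k _ => sinOfExp_summand_eq hc hp hq (fun j hj => hpp j k hj) l (hqp k),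
    ← sum_div, ← hinterp]
  simp only [sub_zero]
  rw [mul_prod_erase univ (fun j => q j ^ 2) (mem_univ l), prod_pow, sq,
    mul_div_mul_left _ _ (prod_ne_zero_iff.mpr fun j _ => hq j)]

end

theorem Complex.sin_pi_mul_sub_eq_sinOfExp {ε : ℂ} (hε : ε = 1 ∨ ε = -1) (x y : ℂ) :
    sin (π * (x - y)) = sinOfExp (2 * I * ε) (exp (ε * I * π * x)) (exp (ε * I * π * y)) := by
  have hexp : exp (π * (x - y) * I) = exp (I * π * x) / exp (I * π * y) := by
    rw [← exp_sub]; ring_nf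
  have hexp_neg : exp (-(π * (x - y)) * I) = exp (I * π * y) / exp (I * π * x) := by
    rw [← exp_sub]; ring_nf
  have hx := exp_ne_zero (I * π * x)
  have hy := exp_ne_zero (I * π * y)
  rw [sin, hexp, hexp_neg, sinOfExp]
  rcases hε with rfl | rfl
  · simp only [one_mul, mul_one]
    field_simp
    linear_combination (exp (I * π * y) ^ 2 - exp (I * π * x) ^ 2) * I_sq
  · simp only [neg_mul, one_mul, mul_neg, mul_one, exp_neg]
    field_simp
    linear_combination (exp (I * π * y) ^ 2 - exp (I * π * x) ^ 2) * I_sq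

theorem sine_exp_identity_at_b_general {m : ℕ} (a b : Fin m → ℂ) (l : Fin m)
    (ha : ∀ j k : Fin m, j ≠ k → Complex.sin ((Real.pi : ℂ) * (a j - a k)) ≠ 0)
    (hb : ∀ k : Fin m, Complex.sin ((Real.pi : ℂ) * (b l - a k)) ≠ 0)
    (ε : ℂ) (hε : ε = 1 ∨ ε = -1) :
    ∑ k : Fin m,
      ((∏ j : Fin m, Complex.sin ((Real.pi : ℂ) * (b j - a k))) /
        (∏ j ∈ Finset.univ.erase k, Complex.sin ((Real.pi : ℂ) * (a j - a k)))) *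
      (Complex.exp (ε * Complex.I * (Real.pi : ℂ) * (b l - a k)) /
        Complex.sin ((Real.pi : ℂ) * (b l - a k)))
    = Complex.exp (ε * Complex.I * (Real.pi : ℂ) * (∑ j : Fin m, (b j - a j))) := by
  have hε₀ : ε ≠ 0 := by rcases hε with rfl | rfl <;> norm_num
  simp only [sin_pi_mul_sub_eq_sinOfExp hε] at ha hb ⊢
  simp only [mul_sum, exp_sum, mul_sub, exp_sub, prod_div_distrib]
  exact sum_sinOfExp_eq (by simp [hε₀]) (fun _ => exp_ne_zero _) (fun _ => exp_ne_zero _) ha l hb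

/-- Identity (2.3) of the paper: the Hermite-type sine identity specialized at `z = b l`. -/
theorem sine_exp_identity_at_b {m : ℕ} (hm : 1 ≤ m) (a b : Fin m → ℂ) (l : Fin m)
    (ha : ∀ j k : Fin m, j ≠ k → Complex.sin ((Real.pi : ℂ) * (a j - a k)) ≠ 0)
    (hb : ∀ k : Fin m, Complex.sin ((Real.pi : ℂ) * (b l - a k)) ≠ 0)
    (ε : ℂ) (hε : ε = 1 ∨ ε = -1) :
    ∑ k : Fin m,
      ((∏ j : Fin m, Complex.sin ((Real.pi : ℂ) * (b j - a k))) /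
        (∏ j ∈ Finset.univ.erase k, Complex.sin ((Real.pi : ℂ) * (a j - a k)))) *
      (Complex.exp (ε * Complex.I * (Real.pi : ℂ) * (b l - a k)) /
        Complex.sin ((Real.pi : ℂ) * (b l - a k)))
    = Complex.exp (ε * Complex.I * (Real.pi : ℂ) * (∑ j : Fin m, (b j - a j))) :=
  sine_exp_identity_at_b_general a b l ha hb ε hε
end

section
/- Let m ≥ 1, n ≥ 0, p = m + n, and let a, b ∈ ℝ^p satisfy: a_i − a_j ∉ ℤ for all i ≠ j, a_i − b_j ∉ ℤ for all i, j, and 2·a_k ∉ ℤ for k = 1,…,m. Then for every x with 0 < x < 1, the one-sided limits L_+ = lim_{ε→0⁺} G[a, b, m, n](−x + iε) and L_− = lim_{ε→0⁺} G[a, b, m, n](−x − iε) exist, and they satisfy Re L_+ = Re L_− = −π · G[(a, 3/2), (b, 3/2), m, n](x) and Im L_+ = −Im L_− = π · G[(a, 1), (b, 1), m, n](x), where (a, c) ∈ ℝ^{p+1} denotes the vector a with the number c appended as last component. -/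
/-!
For real parameters each term of `G[a, b, m, n](z)` is `z ^ a_k` times a real Gamma factor
times a hypergeometric series with real coefficients, continuous on the unit disc. Approaching
`-x` from above, `z ^ a_k → exp (π i a_k) x ^ a_k`; the limit from below is the complex
conjugate. Appending the same number `c` to both parameter rows cancels in the hypergeometric
series, multiplies the Gamma factor by
`1 / (Γ(1 - c + a_k) Γ(c - a_k)) = sin (π (c - a_k)) / π`, and turns the argument `x` of the
series into `-x`; for `c = 3/2` and `c = 1` that factor is `-cos (π a_k) / π` and
`sin (π a_k) / π`.
-/

open Finset

/-- Pochhammer symbol `(x)_n = x (x+1) ⋯ (x+n−1)`. -/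
noncomputable def poch (x : ℂ) (n : ℕ) : ℂ := ∏ i ∈ Finset.range n, (x + (i : ℂ))

/-- The internal Meijer G-series `G[α, β, m', n'](z)` (hypergeometric expansion of
Meijer's `G^{m',n'}_{P,P}(z | β; α)` in the simple-pole case): `α` is the lower row,
`β` the upper row.  The inner series is the generalized hypergeometric series
`F(1 − β + α_k; 1 − α_{[k]} + α_k; (−1)^{P−m'−n'} z)`, written with the deleted-index
product in the denominator together with the factor `n!`. -/
noncomputable def meijerG {P : ℕ} (α β : Fin P → ℂ) (m' n' : ℕ) (z : ℂ) : ℂ :=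
  ∑ k ∈ Finset.univ.filter (fun k : Fin P => (k : ℕ) < m'),
    z ^ (α k) *
      (((∏ j ∈ (Finset.univ.filter (fun j : Fin P => (j : ℕ) < m')).erase k,
            Complex.Gamma (α j - α k)) *
          ∏ j ∈ Finset.univ.filter (fun j : Fin P => (j : ℕ) < n'),
            Complex.Gamma (1 - β j + α k)) /
        ((∏ j ∈ Finset.univ.filter (fun j : Fin P => m' ≤ (j : ℕ)),
            Complex.Gamma (1 - α j + α k)) *
          ∏ j ∈ Finset.univ.filter (fun j : Fin P => n' ≤ (j : ℕ)),
            Complex.Gamma (β j - α k))) *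
      ∑' n : ℕ,
        ((∏ j : Fin P, poch (1 - β j + α k) n) /
            ((∏ j ∈ Finset.univ.erase k, poch (1 - α j + α k) n) * (n.factorial : ℂ))) *
          ((-1 : ℂ) ^ (P - m' - n') * z) ^ n

open Filter Topology ComplexConjugate

lemma poch_succ (x : ℂ) (n : ℕ) : poch x (n + 1) = poch x n * (x + n) :=
  prod_range_succ _ _

lemma poch_one (n : ℕ) : poch 1 n = n.factorial := by
  simp [poch, ← prod_range_add_one_eq_factorial, add_comm]

lemma poch_ofReal_ne_zero {t : ℝ} (h : ∀ j : ℤ, t ≠ j) (n : ℕ) : poch (t : ℂ) n ≠ 0 :=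
  prod_ne_zero_iff.2 fun i _ hi => h (-i) (by exact_mod_cast (eq_neg_of_add_eq_zero_left hi))

lemma conj_poch (x : ℂ) (n : ℕ) : conj (poch x n) = poch (conj x) n := by
  simp [poch]

section Hypergeometric

variable {ι : Type*} [Fintype ι]

/-- Coefficients of the hypergeometric series with as many lower parameters `w` as upper ones
`u`: the factor `n!` is the Pochhammer symbol of the lower parameter `1`. -/
noncomputable def hypergeomCoeff (u w : ι → ℂ) (n : ℕ) : ℂ :=
  (∏ i, poch (u i) n) / ∏ i, poch (w i) n

noncomputable def hypergeomSeries (u w : ι → ℂ) (z : ℂ) : ℂ :=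
  ∑' n, hypergeomCoeff u w n * z ^ n

lemma hypergeomCoeff_succ (u w : ι → ℂ) (n : ℕ) :
    hypergeomCoeff u w (n + 1) = hypergeomCoeff u w n * ∏ i, (u i + n) / (w i + n) := by
  simp only [hypergeomCoeff, poch_succ, prod_mul_distrib, prod_div_distrib]
  exact mul_div_mul_comm _ _ _ _

lemma tendsto_prod_add_div_add (u w : ι → ℂ) :
    Tendsto (fun n : ℕ => ∏ i, (u i + n) / (w i + n)) atTop (𝓝 1) := by
  rw [← prod_const_one]
  refine tendsto_finsetProd _ fun i _ => ?_
  simpa using tendsto_add_mul_div_add_mul_atTop_nhds (u i) (w i) 1 one_ne_zero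

/-- Where a lower Pochhammer symbol vanishes, the coefficients are eventually `0`, since
`x / 0 = 0`. -/
lemma summable_norm_hypergeomCoeff_mul_pow (u w : ι → ℂ) {r : ℝ} (hr : |r| < 1) :
    Summable fun n => ‖hypergeomCoeff u w n‖ * r ^ n := by
  set ρ := (1 + |r|) / 2
  have hρ : |r| < ρ := by simp only [ρ]; linarith
  have hratio : ∀ᶠ n : ℕ in atTop, ‖∏ i, (u i + n) / (w i + n)‖ * |r| ≤ ρ := by
    have hlim := (tendsto_prod_add_div_add u w).norm.mul_const |r|
    exact (hlim.eventually (gt_mem_nhds (by simpa using hρ))).mono fun n hn => hn.le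
  refine summable_of_ratio_norm_eventually_le (r := ρ) (by simp only [ρ]; linarith) ?_
  filter_upwards [hratio] with n hn
  simp only [norm_mul, norm_pow, Real.norm_eq_abs, abs_norm, hypergeomCoeff_succ, pow_succ]
  calc ‖hypergeomCoeff u w n‖ * ‖∏ i, (u i + n) / (w i + n)‖ * (|r| ^ n * |r|)
      = (‖∏ i, (u i + n) / (w i + n)‖ * |r|) * (‖hypergeomCoeff u w n‖ * |r| ^ n) := by
        ring
    _ ≤ ρ * (‖hypergeomCoeff u w n‖ * |r| ^ n) := by gcongr

lemma continuousOn_hypergeomSeries (u w : ι → ℂ) :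
    ContinuousOn (hypergeomSeries u w) (Metric.ball 0 1) := by
  intro z hz
  rw [mem_ball_zero_iff] at hz
  set r := (‖z‖ + 1) / 2
  have hzr : ‖z‖ < r := by simp only [r]; linarith
  have hr : |r| < 1 := by rw [abs_of_pos (by positivity)]; simp only [r]; linarith
  have hcont : ContinuousOn (hypergeomSeries u w) (Metric.closedBall 0 r) := by
    refine continuousOn_tsum (fun n => (continuous_const.mul (continuous_pow n)).continuousOn)
      (summable_norm_hypergeomCoeff_mul_pow u w hr) fun n y hy => ?_
    rw [norm_mul, norm_pow]
    gcongr
    simpa using hy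
  exact (hcont.continuousAt
    (Metric.closedBall_mem_nhds_of_mem (by simpa using hzr))).continuousWithinAt

lemma conj_hypergeomSeries (u w : ι → ℂ) (z : ℂ) :
    conj (hypergeomSeries u w z) = hypergeomSeries (conj ∘ u) (conj ∘ w) (conj z) := by
  simp [hypergeomSeries, hypergeomCoeff, Complex.conj_tsum, conj_poch]

end Hypergeometric

section MeijerG

variable {P : ℕ}

noncomputable def meijerGamma (α β : Fin P → ℂ) (m' n' : ℕ) (k : Fin P) : ℂ :=
  ((∏ j ∈ (univ.filter fun j : Fin P => (j : ℕ) < m').erase k, Complex.Gamma (α j - α k)) *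
      ∏ j ∈ univ.filter (fun j : Fin P => (j : ℕ) < n'), Complex.Gamma (1 - β j + α k)) /
    ((∏ j ∈ univ.filter (fun j : Fin P => m' ≤ (j : ℕ)), Complex.Gamma (1 - α j + α k)) *
      ∏ j ∈ univ.filter (fun j : Fin P => n' ≤ (j : ℕ)), Complex.Gamma (β j - α k))

lemma prod_erase_poch_mul_factorial (α : Fin P → ℂ) (k : Fin P) (n : ℕ) :
    (∏ j ∈ univ.erase k, poch (1 - α j + α k) n) * (n.factorial : ℂ) =
      ∏ j, poch (1 - α j + α k) n := by
  rw [← prod_erase_mul _ _ (mem_univ k), sub_add_cancel, poch_one]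

/-- The lower parameter `1 - α k + α k = 1` of the inner series carries the factor `n!`. -/
lemma meijerG_eq_sum (α β : Fin P → ℂ) (m' n' : ℕ) (z : ℂ) :
    meijerG α β m' n' z = ∑ k ∈ univ.filter (fun k : Fin P => (k : ℕ) < m'),
      z ^ α k * meijerGamma α β m' n' k *
        hypergeomSeries (fun j => 1 - β j + α k) (fun j => 1 - α j + α k)
          ((-1) ^ (P - m' - n') * z) := by
  simp only [meijerG, meijerGamma, hypergeomSeries, hypergeomCoeff, prod_erase_poch_mul_factorial]

lemma continuousWithinAt_cpow_const_of_re_neg_of_im_zero {z : ℂ} (hre : z.re < 0)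
    (him : z.im = 0) (s : ℂ) : ContinuousWithinAt (· ^ s) {w : ℂ | 0 ≤ w.im} z := by
  have hz : z ≠ 0 := fun h => by simp [h] at hre
  have hexp :
      ContinuousWithinAt (fun w => Complex.exp (Complex.log w * s)) {w : ℂ | 0 ≤ w.im} z :=
    Complex.continuous_exp.continuousAt.comp_continuousWithinAt
      ((Complex.continuousWithinAt_log_of_re_neg_of_im_zero hre him).mul continuousWithinAt_const)
  refine hexp.congr_of_eventuallyEq ?_ (Complex.cpow_def_of_ne_zero hz s)
  filter_upwards [mem_nhdsWithin_of_mem_nhds (isOpen_ne.mem_nhds hz)] with w hw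
  exact Complex.cpow_def_of_ne_zero hw s

lemma continuousWithinAt_meijerG (α β : Fin P → ℂ) (m' n' : ℕ) {z : ℂ} (hre : z.re < 0)
    (him : z.im = 0) (hz : ‖z‖ < 1) :
    ContinuousWithinAt (meijerG α β m' n') {w : ℂ | 0 ≤ w.im} z := by
  rw [funext (meijerG_eq_sum α β m' n')]
  refine tendsto_finsetSum _ fun k _ => ?_
  have hsign : (-1 : ℂ) ^ (P - m' - n') * z ∈ Metric.ball 0 1 := by simpa using hz
  exact ((continuousWithinAt_cpow_const_of_re_neg_of_im_zero hre him _).mul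
    continuousWithinAt_const).mul ((continuousOn_hypergeomSeries _ _).continuousAt
      (Metric.isOpen_ball.mem_nhds hsign) |>.comp (continuous_const_mul _).continuousAt
      |>.continuousWithinAt)

lemma tendsto_neg_ofReal_add_mul_I (x : ℝ) :
    Tendsto (fun ε : ℝ => -(x : ℂ) + ε * Complex.I) (𝓝[>] 0)
      (𝓝[{w : ℂ | 0 ≤ w.im}] (-x)) := by
  have hcont : Continuous fun ε : ℝ => -(x : ℂ) + ε * Complex.I := by fun_prop
  refine tendsto_nhdsWithin_of_tendsto_nhds_of_eventually_within _ ?_ ?_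
  · exact tendsto_nhdsWithin_of_tendsto_nhds (by simpa using hcont.tendsto 0)
  · filter_upwards [self_mem_nhdsWithin] with ε hε
    simpa using le_of_lt hε

lemma conj_meijerGamma (α β : Fin P → ℂ) (m' n' : ℕ) (k : Fin P) :
    conj (meijerGamma α β m' n' k) = meijerGamma (conj ∘ α) (conj ∘ β) m' n' k := by
  simp [meijerGamma, ← Complex.Gamma_conj]

lemma conj_meijerG (α β : Fin P → ℂ) (m' n' : ℕ) {z : ℂ} (hz : z.arg ≠ Real.pi) :
    conj (meijerG α β m' n' z) = meijerG (conj ∘ α) (conj ∘ β) m' n' (conj z) := by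
  have hcpow : ∀ s : ℂ, conj (z ^ s) = conj z ^ conj s := fun s => by
    rw [Complex.conj_cpow z (conj s) hz, Complex.conj_conj]
  simp [meijerG_eq_sum, hcpow, conj_meijerGamma, conj_hypergeomSeries, Function.comp_def]

end MeijerG

section Snoc

variable {P m' n' : ℕ}

lemma hypergeomSeries_cancel_last (u w : Fin (P + 1) → ℂ)
    (hlast : u (Fin.last P) = w (Fin.last P)) (hpoch : ∀ n, poch (w (Fin.last P)) n ≠ 0)
    (z : ℂ) :
    hypergeomSeries u w z =
      hypergeomSeries (fun j : Fin P => u j.castSucc) (fun j => w j.castSucc) z := by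
  simp only [hypergeomSeries, hypergeomCoeff, Fin.prod_univ_castSucc, hlast,
    mul_div_mul_right _ _ (hpoch _)]

lemma filter_val_lt_eq_map_castSuccEmb (h : m' ≤ P) :
    univ.filter (fun j : Fin (P + 1) => (j : ℕ) < m') =
      (univ.filter fun j : Fin P => (j : ℕ) < m').map Fin.castSuccEmb := by
  ext j
  induction j using Fin.lastCases <;> simp [h]

lemma filter_le_val_eq_cons_last (h : m' ≤ P) :
    univ.filter (fun j : Fin (P + 1) => m' ≤ (j : ℕ)) =
      cons (Fin.last P) ((univ.filter fun j : Fin P => m' ≤ (j : ℕ)).map Fin.castSuccEmb)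
        (by simp) := by
  ext j
  induction j using Fin.lastCases <;> simp [h]

lemma inv_Gamma_mul_Gamma_one_sub (s : ℂ) :
    (Complex.Gamma s * Complex.Gamma (1 - s))⁻¹ =
      (Real.pi : ℂ)⁻¹ * Complex.sin (Real.pi * s) := by
  rw [Complex.Gamma_mul_Gamma_one_sub, inv_div, div_eq_inv_mul]

lemma meijerGamma_snoc (α β : Fin P → ℂ) (c : ℂ) (hm : m' ≤ P) (hn : n' ≤ P)
    (k : Fin P) :
    meijerGamma (Fin.snoc α c) (Fin.snoc β c) m' n' k.castSucc =
      (Real.pi : ℂ)⁻¹ * Complex.sin (Real.pi * (c - α k)) * meijerGamma α β m' n' k := by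
  have hcastSucc : k.castSucc = Fin.castSuccEmb k := rfl
  rw [← inv_Gamma_mul_Gamma_one_sub, show 1 - (c - α k) = 1 - c + α k by ring, meijerGamma,
    filter_val_lt_eq_map_castSuccEmb hm, filter_val_lt_eq_map_castSuccEmb hn,
    filter_le_val_eq_cons_last hm, filter_le_val_eq_cons_last hn, hcastSucc, ← map_erase]
  simp only [prod_map, prod_cons, Fin.coe_castSuccEmb, Fin.snoc_castSucc, Fin.snoc_last,
    meijerGamma]
  ring

lemma meijerG_snoc (α β : Fin P → ℂ) (c : ℂ) (hm : m' ≤ P) (hn : n' ≤ P)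
    (hc : ∀ k : Fin P, (k : ℕ) < m' → ∀ N, poch (1 - c + α k) N ≠ 0) (z : ℂ) :
    meijerG (Fin.snoc α c) (Fin.snoc β c) m' n' z =
      ∑ k ∈ univ.filter (fun k : Fin P => (k : ℕ) < m'),
        (Real.pi : ℂ)⁻¹ * Complex.sin (Real.pi * (c - α k)) *
          (z ^ α k * meijerGamma α β m' n' k *
            hypergeomSeries (fun j => 1 - β j + α k) (fun j => 1 - α j + α k)
              ((-1) ^ (P + 1 - m' - n') * z)) := by
  rw [meijerG_eq_sum, filter_val_lt_eq_map_castSuccEmb hm, sum_map]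
  refine sum_congr rfl fun k hk => ?_
  have hk : (k : ℕ) < m' := (mem_filter.1 hk).2
  rw [Fin.coe_castSuccEmb, meijerGamma_snoc α β c hm hn, hypergeomSeries_cancel_last _ _
    (by simp) (by simpa using hc k hk)]
  simp only [Fin.snoc_castSucc]
  ring

end Snoc

section BoundaryValues

variable {P : ℕ} {x : ℝ}

lemma meijerG_neg_ofReal (α β : Fin P → ℂ) (m' n' : ℕ) (hx : 0 ≤ x) :
    meijerG α β m' n' (-x) = ∑ k ∈ univ.filter (fun k : Fin P => (k : ℕ) < m'),
      Complex.exp (Real.pi * Complex.I * α k) * ((x : ℂ) ^ α k * meijerGamma α β m' n' k *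
        hypergeomSeries (fun j => 1 - β j + α k) (fun j => 1 - α j + α k)
          ((-1) ^ (P - m' - n') * -x)) := by
  rw [meijerG_eq_sum]
  refine sum_congr rfl fun k _ => ?_
  have hcpow :
      (-(x : ℂ)) ^ α k = (x : ℂ) ^ α k * Complex.exp (Real.pi * Complex.I * α k) := by
    simpa using Complex.ofReal_cpow_of_nonpos (neg_nonpos.2 hx) (α k)
  rw [hcpow]
  ring

lemma tendsto_meijerG_neg_ofReal_add_mul_I (α β : Fin P → ℂ) (m' n' : ℕ) (hx0 : 0 < x)
    (hx1 : x < 1) :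
    Tendsto (fun ε : ℝ => meijerG α β m' n' (-x + ε * Complex.I)) (𝓝[>] 0)
      (𝓝 (meijerG α β m' n' (-x))) :=
  (continuousWithinAt_meijerG α β m' n' (by simpa using hx0) (by simp)
    (by simpa [abs_of_pos hx0] using hx1)).tendsto.comp (tendsto_neg_ofReal_add_mul_I x)

/-- For real parameters the lower boundary value is the conjugate of the upper one, by the
reflection symmetry `G(conj z) = conj (G z)` off the cut. -/
lemma tendsto_meijerG_neg_ofReal_sub_mul_I {α β : Fin P → ℂ} (hα : conj ∘ α = α)
    (hβ : conj ∘ β = β) (m' n' : ℕ) (hx0 : 0 < x) (hx1 : x < 1) :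
    Tendsto (fun ε : ℝ => meijerG α β m' n' (-x - ε * Complex.I)) (𝓝[>] 0)
      (𝓝 (conj (meijerG α β m' n' (-x)))) := by
  refine ((Complex.continuous_conj.tendsto _).comp
    (tendsto_meijerG_neg_ofReal_add_mul_I α β m' n' hx0 hx1)).congr' ?_
  filter_upwards [self_mem_nhdsWithin] with ε hε
  have harg : (-(x : ℂ) + ε * Complex.I).arg ≠ Real.pi := fun h => by
    simpa [(Set.mem_Ioi.1 hε).ne'] using (Complex.arg_eq_pi_iff.1 h).2
  simp only [Function.comp_apply, conj_meijerG α β m' n' harg, hα, hβ]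
  simp [sub_eq_add_neg]

lemma ofReal_re_sum_exp_mul_I_mul_ofReal {ι : Type*} (s : Finset ι) (θ r : ι → ℝ) :
    ((∑ k ∈ s, Complex.exp (θ k * Complex.I) * r k).re : ℂ) =
      ∑ k ∈ s, Complex.cos (θ k) * r k := by
  simp [Complex.re_sum, Complex.exp_ofReal_mul_I_re]

lemma ofReal_im_sum_exp_mul_I_mul_ofReal {ι : Type*} (s : Finset ι) (θ r : ι → ℝ) :
    ((∑ k ∈ s, Complex.exp (θ k * Complex.I) * r k).im : ℂ) =
      ∑ k ∈ s, Complex.sin (θ k) * r k := by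
  simp [Complex.im_sum, Complex.exp_ofReal_mul_I_im]

end BoundaryValues

section RealParameters

variable {m n : ℕ} (a b : Fin (m + n) → ℝ) (x : ℝ)

/-- The `k`-th term of `G[a, b, m, n](-x)` without its phase `exp (π i a_k)`. -/
noncomputable def meijerGAmplitude (k : Fin (m + n)) : ℝ :=
  ((x : ℂ) ^ (a k : ℂ) * meijerGamma (fun i => (a i : ℂ)) (fun i => (b i : ℂ)) m n k *
    hypergeomSeries (fun j => 1 - b j + a k) (fun j => 1 - a j + a k) (-x)).re

variable {x}

lemma ofReal_meijerGAmplitude (hx : 0 ≤ x) (k : Fin (m + n)) :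
    (meijerGAmplitude a b x k : ℂ) =
      (x : ℂ) ^ (a k : ℂ) * meijerGamma (fun i => (a i : ℂ)) (fun i => (b i : ℂ)) m n k *
        hypergeomSeries (fun j => 1 - b j + a k) (fun j => 1 - a j + a k) (-x) := by
  refine Complex.conj_eq_iff_re.1 ?_
  rw [map_mul, map_mul, ← Complex.ofReal_cpow hx, Complex.conj_ofReal, conj_meijerGamma,
    conj_hypergeomSeries, ← Complex.ofReal_neg, Complex.conj_ofReal]
  simp [Function.comp_def]

lemma meijerG_neg_ofReal_eq_sum (hx : 0 ≤ x) :
    meijerG (fun i => (a i : ℂ)) (fun i => (b i : ℂ)) m n (-x) =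
      ∑ k ∈ univ.filter (fun k : Fin (m + n) => (k : ℕ) < m),
        Complex.exp ((Real.pi * a k : ℝ) * Complex.I) * meijerGAmplitude a b x k := by
  rw [meijerG_neg_ofReal _ _ m n hx]
  refine sum_congr rfl fun k _ => ?_
  rw [Nat.sub_sub, Nat.sub_self, pow_zero, one_mul, ofReal_meijerGAmplitude a b hx]
  push_cast
  ring_nf

lemma meijerG_snoc_ofReal_eq_sum (hx : 0 ≤ x) (c : ℂ)
    (hc : ∀ k : Fin (m + n), (k : ℕ) < m → ∀ N, poch (1 - c + a k) N ≠ 0) :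
    meijerG (Fin.snoc (fun i => (a i : ℂ)) c) (Fin.snoc (fun i => (b i : ℂ)) c) m n x =
      ∑ k ∈ univ.filter (fun k : Fin (m + n) => (k : ℕ) < m),
        (Real.pi : ℂ)⁻¹ * Complex.sin (Real.pi * (c - a k)) * meijerGAmplitude a b x k := by
  rw [meijerG_snoc _ _ c (by omega) (by omega) hc]
  refine sum_congr rfl fun k _ => ?_
  rw [show m + n + 1 - m - n = 1 by omega, pow_one, neg_one_mul,
    ofReal_meijerGAmplitude a b hx]

lemma ofReal_re_meijerG_neg_ofReal
    (ha2 : ∀ k : Fin (m + n), (k : ℕ) < m → ∀ j : ℤ, 2 * a k ≠ (j : ℝ))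
    (hx : 0 ≤ x) :
    ((meijerG (fun i => (a i : ℂ)) (fun i => (b i : ℂ)) m n (-x)).re : ℂ) =
      -Real.pi * meijerG (Fin.snoc (fun i => (a i : ℂ)) (3 / 2))
        (Fin.snoc (fun i => (b i : ℂ)) (3 / 2)) m n x := by
  have hc : ∀ k : Fin (m + n), (k : ℕ) < m → ∀ N, poch (1 - 3 / 2 + a k) N ≠ 0 := by
    intro k hk
    rw [show 1 - 3 / 2 + (a k : ℂ) = ((a k - 1 / 2 : ℝ) : ℂ) by push_cast; ring]
    exact poch_ofReal_ne_zero fun j h => ha2 k hk (2 * j + 1) (by push_cast; linarith)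
  rw [meijerG_neg_ofReal_eq_sum a b hx, ofReal_re_sum_exp_mul_I_mul_ofReal,
    meijerG_snoc_ofReal_eq_sum a b hx _ hc, mul_sum]
  refine sum_congr rfl fun k _ => ?_
  have hsin :
      Complex.sin (Real.pi * (3 / 2 - a k)) = -Complex.cos ((Real.pi * a k : ℝ)) := by
    rw [show (Real.pi : ℂ) * (3 / 2 - a k) = Real.pi / 2 - (Real.pi * a k : ℝ) + Real.pi by
      push_cast; ring, Complex.sin_add_pi, Complex.sin_pi_div_two_sub]
  rw [hsin]
  field_simp

lemma ofReal_im_meijerG_neg_ofReal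
    (ha2 : ∀ k : Fin (m + n), (k : ℕ) < m → ∀ j : ℤ, 2 * a k ≠ (j : ℝ))
    (hx : 0 ≤ x) :
    ((meijerG (fun i => (a i : ℂ)) (fun i => (b i : ℂ)) m n (-x)).im : ℂ) =
      Real.pi * meijerG (Fin.snoc (fun i => (a i : ℂ)) 1)
        (Fin.snoc (fun i => (b i : ℂ)) 1) m n x := by
  have hc : ∀ k : Fin (m + n), (k : ℕ) < m → ∀ N, poch (1 - 1 + a k) N ≠ 0 := by
    intro k hk
    rw [sub_self, zero_add]
    exact poch_ofReal_ne_zero fun j h => ha2 k hk (2 * j) (by push_cast; linarith)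
  rw [meijerG_neg_ofReal_eq_sum a b hx, ofReal_im_sum_exp_mul_I_mul_ofReal,
    meijerG_snoc_ofReal_eq_sum a b hx _ hc, mul_sum]
  refine sum_congr rfl fun k _ => ?_
  rw [mul_one_sub, Complex.sin_pi_sub, ← Complex.ofReal_mul]
  field_simp

end RealParameters

open Filter Topology in
theorem internal_G_boundary_values_inner_cut_general {m n : ℕ} (a b : Fin (m + n) → ℝ)
    (ha2 : ∀ k : Fin (m + n), (k : ℕ) < m → ∀ j : ℤ, 2 * a k ≠ (j : ℝ))
    (x : ℝ) (hx0 : 0 < x) (hx1 : x < 1) :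
    ∃ Lp Lm : ℂ,
      Tendsto (fun ε : ℝ =>
          meijerG (fun i => (a i : ℂ)) (fun i => (b i : ℂ)) m n (-(x : ℂ) + (ε : ℂ) * Complex.I))
        (nhdsWithin 0 (Set.Ioi 0)) (nhds Lp) ∧
      Tendsto (fun ε : ℝ =>
          meijerG (fun i => (a i : ℂ)) (fun i => (b i : ℂ)) m n (-(x : ℂ) - (ε : ℂ) * Complex.I))
        (nhdsWithin 0 (Set.Ioi 0)) (nhds Lm) ∧
      Lp.re = Lm.re ∧
      (Lp.re : ℂ) = -(Real.pi : ℂ) *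
        meijerG (Fin.snoc (fun i => (a i : ℂ)) ((3 : ℂ) / 2))
          (Fin.snoc (fun i => (b i : ℂ)) ((3 : ℂ) / 2)) m n (x : ℂ) ∧
      Lp.im = -Lm.im ∧
      (Lp.im : ℂ) = (Real.pi : ℂ) *
        meijerG (Fin.snoc (fun i => (a i : ℂ)) (1 : ℂ))
          (Fin.snoc (fun i => (b i : ℂ)) (1 : ℂ)) m n (x : ℂ) := by
  refine ⟨_, _, tendsto_meijerG_neg_ofReal_add_mul_I _ _ m n hx0 hx1,
    tendsto_meijerG_neg_ofReal_sub_mul_I (funext fun i => Complex.conj_ofReal (a i))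
      (funext fun i => Complex.conj_ofReal (b i)) m n hx0 hx1,
    (Complex.conj_re _).symm, ofReal_re_meijerG_neg_ofReal a b ha2 hx0.le,
    by rw [Complex.conj_im, neg_neg], ofReal_im_meijerG_neg_ofReal a b ha2 hx0.le⟩

open Filter Topology in
/-- Theorem 3.1 of the paper: boundary values of the internal G-function
`𝔊^{m,n}_{p,p}` on the banks of the branch cut `(−1, 0]` (simple-pole case). -/
theorem internal_G_boundary_values_inner_cut {m n : ℕ} (hm : 1 ≤ m) (a b : Fin (m + n) → ℝ)
    (haa : ∀ i j, i ≠ j → ∀ k : ℤ, a i - a j ≠ (k : ℝ))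
    (hab : ∀ i j, ∀ k : ℤ, a i - b j ≠ (k : ℝ))
    (ha2 : ∀ k : Fin (m + n), (k : ℕ) < m → ∀ j : ℤ, 2 * a k ≠ (j : ℝ))
    (x : ℝ) (hx0 : 0 < x) (hx1 : x < 1) :
    ∃ Lp Lm : ℂ,
      Tendsto (fun ε : ℝ =>
          meijerG (fun i => (a i : ℂ)) (fun i => (b i : ℂ)) m n (-(x : ℂ) + (ε : ℂ) * Complex.I))
        (nhdsWithin 0 (Set.Ioi 0)) (nhds Lp) ∧
      Tendsto (fun ε : ℝ =>
          meijerG (fun i => (a i : ℂ)) (fun i => (b i : ℂ)) m n (-(x : ℂ) - (ε : ℂ) * Complex.I))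
        (nhdsWithin 0 (Set.Ioi 0)) (nhds Lm) ∧
      Lp.re = Lm.re ∧
      (Lp.re : ℂ) = -(Real.pi : ℂ) *
        meijerG (Fin.snoc (fun i => (a i : ℂ)) ((3 : ℂ) / 2))
          (Fin.snoc (fun i => (b i : ℂ)) ((3 : ℂ) / 2)) m n (x : ℂ) ∧
      Lp.im = -Lm.im ∧
      (Lp.im : ℂ) = (Real.pi : ℂ) *
        meijerG (Fin.snoc (fun i => (a i : ℂ)) (1 : ℂ))
          (Fin.snoc (fun i => (b i : ℂ)) (1 : ℂ)) m n (x : ℂ) :=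
  internal_G_boundary_values_inner_cut_general a b ha2 x hx0 hx1
end
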